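/- arXiv:math/0401150 — 5 statements merged into one kernel-verified Lean document; each statement's English description precedes it below -/
import Mathlib

section
/- Let H be a closed additive subgroup of ℝ^r. Then either H = ℝ^r, or there exists a nonzero ℝ-linear form ψ on ℝ^r such that ψ(H) ⊆ ℤ. -/
/-!
Let `V` be the largest subspace contained in `H` and `W` a complement of it. The closed subgroup
`H ∩ W` contains no line, hence is discrete: otherwise, normalising nonzero elements of it that
tend to `0` and using compactness of the sphere gives a unit vector `a` with `ℝ a ⊆ H`. A discrete
subgroup of `W` either spans a proper subspace, killed by a nonzero form, or is a lattice, on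
which the coordinate forms are integral. Since `H = V + (H ∩ W)`, composing such a form with the
projection onto `W` along `V` gives `ψ`, unless `W = 0`, i.e. `H = ⊤`.
-/

open Filter Topology

namespace AddSubgroup

variable {E : Type*}

section Module

variable [AddCommGroup E] [Module ℝ E] {H : AddSubgroup E}

variable (H) in
def linealitySpace : Submodule ℝ E where
  carrier := {x | ∀ t : ℝ, t • x ∈ H}
  add_mem' hx hy t := by rw [smul_add]; exact H.add_mem (hx t) (hy t)
  zero_mem' t := by rw [smul_zero]; exact H.zero_mem
  smul_mem' c _ hx t := by rw [smul_smul]; exact hx (t * c)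

lemma mem_linealitySpace {x : E} : x ∈ H.linealitySpace ↔ ∀ t : ℝ, t • x ∈ H := Iff.rfl

lemma mem_of_mem_linealitySpace {x : E} (hx : x ∈ H.linealitySpace) : x ∈ H := by
  simpa using hx 1

lemma eq_top_of_linealitySpace_eq_top (h : H.linealitySpace = ⊤) : H = ⊤ :=
  eq_top_iff.mpr fun _ _ ↦ mem_of_mem_linealitySpace (h ▸ Submodule.mem_top)

lemma projection_mem_of_isCompl_linealitySpace {W : Submodule ℝ E}
    (hW : IsCompl H.linealitySpace W) {x : E} (hx : x ∈ H) : W.projection _ hW.symm x ∈ H := by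
  rw [Submodule.projection_eq_self_sub_projection hW]
  exact H.sub_mem hx (mem_of_mem_linealitySpace (Submodule.projection_apply_mem _ _))

lemma linealitySpace_comap_subtype_eq_bot {W : Submodule ℝ E}
    (hW : Disjoint H.linealitySpace W) :
    (H.comap W.subtype.toAddMonoidHom).linealitySpace = ⊥ := by
  refine (Submodule.eq_bot_iff _).mpr fun w hw ↦ ?_
  have : (w : E) ∈ H.linealitySpace := mem_linealitySpace.mpr (mem_linealitySpace.mp hw)
  exact Subtype.ext (Submodule.disjoint_def.mp hW _ this w.2)

end Module

section Normed

variable [NormedAddCommGroup E] [NormedSpace ℝ E] {H : AddSubgroup E}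

lemma mem_linealitySpace_of_tendsto (hH : IsClosed (H : Set E)) {x : ℕ → E} {a : E}
    (hxH : ∀ n, x n ∈ H) (hx0 : ∀ n, x n ≠ 0) (hx : Tendsto x atTop (𝓝 0))
    (ha : Tendsto (fun n ↦ ‖x n‖⁻¹ • x n) atTop (𝓝 a)) : a ∈ H.linealitySpace := by
  refine mem_linealitySpace.mpr fun t ↦ ?_
  set c : ℕ → ℝ := fun n ↦ ‖x n‖
  have hc : ∀ n, 0 < c n := fun n ↦ norm_pos_iff.mpr (hx0 n)
  -- `⌊t / c n⌋ • x n ∈ H` approximates `t • a` since `c n → 0`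
  have hcoef : Tendsto (fun n ↦ (⌊t / c n⌋ * c n : ℝ)) atTop (𝓝 t) := by
    refine tendsto_iff_norm_sub_tendsto_zero.mpr
      (squeeze_zero_norm (fun n ↦ ?_) (tendsto_zero_iff_norm_tendsto_zero.mp hx))
    rw [norm_norm, norm_sub_rev, Real.norm_of_nonneg (Int.sub_floor_div_mul_nonneg t (hc n))]
    exact (Int.sub_floor_div_mul_lt t (hc n)).le
  have hmem : ∀ n, (⌊t / c n⌋ * c n) • (‖x n‖⁻¹ • x n) ∈ H := fun n ↦ by
    rw [smul_smul, mul_assoc, mul_inv_cancel₀ (hc n).ne', mul_one, Int.cast_smul_eq_zsmul]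
    exact H.zsmul_mem (hxH n) _
  exact hH.mem_of_tendsto (hcoef.smul ha) (Eventually.of_forall hmem)

lemma discreteTopology_of_linealitySpace_eq_bot [FiniteDimensional ℝ E]
    (hH : IsClosed (H : Set E)) (h : H.linealitySpace = ⊥) : DiscreteTopology H := by
  refine discreteTopology_of_isOpen_singleton_zero (Metric.isOpen_singleton_iff.mpr ?_)
  by_contra! hsmall
  choose y hy hy0 using fun n : ℕ ↦ hsmall (1 / (n + 1)) Nat.one_div_pos_of_nat
  set x : ℕ → E := fun n ↦ y n
  have hx0 : ∀ n, x n ≠ 0 := fun n ↦ by simpa [x] using hy0 n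
  have hx : Tendsto x atTop (𝓝 0) :=
    tendsto_zero_iff_norm_tendsto_zero.mpr <| squeeze_zero (fun _ ↦ norm_nonneg _)
      (fun n ↦ by simpa [x, dist_eq_norm] using (hy n).le) tendsto_one_div_add_atTop_nhds_zero_nat
  have hsphere : ∀ n, ‖x n‖⁻¹ • x n ∈ Metric.sphere (0 : E) 1 := fun n ↦ by
    simp [norm_smul, hx0 n]
  obtain ⟨a, ha, φ, hφ, hlim⟩ := (isCompact_sphere (0 : E) 1).tendsto_subseq hsphere
  have := mem_linealitySpace_of_tendsto hH (fun n ↦ (y (φ n)).2) (fun n ↦ hx0 (φ n))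
    (hx.comp hφ.tendsto_atTop) hlim
  rw [h, Submodule.mem_bot] at this
  simp [this] at ha

lemma exists_ne_zero_forall_mem_int [FiniteDimensional ℝ E] [Nontrivial E] (L : AddSubgroup E)
    [DiscreteTopology L] : ∃ φ : E →ₗ[ℝ] ℝ, φ ≠ 0 ∧ ∀ x ∈ L, ∃ m : ℤ, φ x = m := by
  by_cases hspan : Submodule.span ℝ (L : Set E) = ⊤
  · let Λ := L.toIntSubmodule
    have : DiscreteTopology Λ := ‹DiscreteTopology L›
    have : IsZLattice ℝ Λ := ⟨hspan⟩
    let b := Module.Free.chooseBasis ℤ Λ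
    obtain ⟨i⟩ := (b.ofZLatticeBasis ℝ Λ).index_nonempty
    refine ⟨(b.ofZLatticeBasis ℝ Λ).coord i, fun h ↦ ?_, fun x hx ↦ ⟨b.repr ⟨x, hx⟩ i, ?_⟩⟩
    · simpa using LinearMap.congr_fun h (b.ofZLatticeBasis ℝ Λ i)
    · exact b.ofZLatticeBasis_repr_apply ℝ Λ ⟨x, hx⟩ i
  · obtain ⟨φ, hφ0, hφ⟩ := Submodule.exists_dual_map_eq_bot_of_lt_top
      (lt_top_iff_ne_top.mpr hspan) inferInstance
    refine ⟨φ, hφ0, fun x hx ↦ ⟨0, ?_⟩⟩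
    have : φ x ∈ (Submodule.span ℝ (L : Set E)).map φ :=
      Submodule.mem_map_of_mem (Submodule.subset_span hx)
    simpa [hφ] using this

end Normed

end AddSubgroup

/-- If `H` is a closed additive subgroup of `ℝ^r`, then either `H = ℝ^r` or there exists a
nonzero `ℝ`-linear form `ψ` on `ℝ^r` with `ψ(H) ⊆ ℤ`. -/
theorem closed_subgroup_top_or_integer_form (r : ℕ) (H : AddSubgroup (Fin r → ℝ))
    (hH : IsClosed (H : Set (Fin r → ℝ))) :
    H = ⊤ ∨ ∃ ψ : (Fin r → ℝ) →ₗ[ℝ] ℝ, ψ ≠ 0 ∧ ∀ x ∈ H, ∃ m : ℤ, ψ x = m := by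
  set V := H.linealitySpace
  by_cases hV : V = ⊤
  · exact Or.inl (AddSubgroup.eq_top_of_linealitySpace_eq_top hV)
  right
  obtain ⟨W, hW⟩ := V.exists_isCompl
  have : Nontrivial W := Submodule.nontrivial_iff_ne_bot.mpr fun hW0 ↦ hV (by
    simpa [hW0] using hW.sup_eq_top)
  set HW := H.comap W.subtype.toAddMonoidHom
  have : DiscreteTopology HW := HW.discreteTopology_of_linealitySpace_eq_bot
    (hH.preimage W.subtype.continuous_of_finiteDimensional)
    (AddSubgroup.linealitySpace_comap_subtype_eq_bot hW.disjoint)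
  obtain ⟨φ, hφ0, hφ⟩ := HW.exists_ne_zero_forall_mem_int
  refine ⟨φ ∘ₗ W.projectionOnto V hW.symm, fun h ↦ hφ0 ?_, fun x hx ↦ hφ _ ?_⟩
  · exact (LinearMap.cancel_right (W.projectionOnto_surjective hW.symm)).mp
      (h.trans (LinearMap.zero_comp _).symm)
  · exact AddSubgroup.projection_mem_of_isCompl_linealitySpace hW hx
end

section
/- Let ω₁, …, ω_r ∈ ℝ^n be vectors that are linearly independent over ℤ (i.e., the only integer relation q₁ω₁ + ⋯ + q_rω_r = 0 with q_j ∈ ℤ is the trivial one). Then the additive subgroup G := { x ∈ ℝ^r : x_j = ⟨t, ω_j⟩ + p_j for some t ∈ ℝ^n and p_j ∈ ℤ, j = 1,…,r } is dense in ℝ^r. -/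
/-!
Let `H` be the closure of `G`. A closed subgroup `H ≠ ℝ^r` of a finite-dimensional real space is
sent into `ℤ` by some nonzero linear functional `f`: if `H` is discrete it is a lattice in its span,
and `f` is a coordinate for a `ℤ`-basis of it or vanishes on its span; otherwise small nonzero
elements of `H` have accumulating directions, so `H` contains a line, and induction on the
dimension applies to `H` intersected with a complement of that line. Since `ℤ^r ⊆ G`, such an `f`
is `x ↦ ∑ q_j x_j` with `q ∈ ℤ^r`; being integral on the linear subspace `{(⟨t, ω_j⟩)_j}` it
vanishes there, which says `∑ q_j ω_j = 0`. Hence `q = 0`, contradicting `f ≠ 0`.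
-/

open Filter Topology Module Submodule

theorem LinearMap.eq_zero_of_forall_exists_int {K V : Type*} [Field K] [CharZero K]
    [AddCommGroup V] [Module K V] (f : V →ₗ[K] K) (hf : ∀ v, ∃ z : ℤ, f v = z) : f = 0 := by
  refine LinearMap.ext fun v => by_contra fun hv => ?_
  rw [LinearMap.zero_apply] at hv
  obtain ⟨z, hz⟩ := hf ((2 * f v)⁻¹ • v)
  have h2z : ((2 * z : ℤ) : K) = 1 := by
    rw [Int.cast_mul, ← hz, map_smul, smul_eq_mul, Int.cast_two]
    field_simp
  have : 2 * z = 1 := by exact_mod_cast h2z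
  omega

namespace AddSubgroup

theorem mem_iff_projection_mem {R M : Type*} [Ring R] [AddCommGroup M] [Module R M]
    {p q : Submodule R M} (hpq : IsCompl p q) (H : AddSubgroup M) (hq : (q : Set M) ⊆ H)
    (x : M) : x ∈ H ↔ p.projection q hpq x ∈ H := by
  conv_lhs => rw [← sub_add_cancel x (p.projection q hpq x)]
  exact add_mem_cancel_left (hq (sub_projection_mem hpq x))

theorem exists_seq_tendsto_zero_of_not_discreteTopology {E : Type*} [SeminormedAddCommGroup E]
    (H : AddSubgroup E) (hH : ¬DiscreteTopology H) :
    ∃ h : ℕ → E, (∀ k, h k ∈ H ∧ h k ≠ 0) ∧ Tendsto h atTop (𝓝 0) := by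
  rw [discreteTopology_iff_isOpen_singleton_zero, Metric.isOpen_singleton_iff] at hH
  push Not at hH
  choose h hdist hne using fun k : ℕ => hH (1 / (k + 1)) Nat.one_div_pos_of_nat
  refine ⟨fun k => h k, fun k => ⟨(h k).2, by simpa using hne k⟩, ?_⟩
  have : Tendsto h atTop (𝓝 0) := tendsto_iff_dist_tendsto_zero.2 <|
    squeeze_zero (fun _ => dist_nonneg) (fun k => (hdist k).le)
      tendsto_one_div_add_atTop_nhds_zero_nat
  exact (continuous_subtype_val.tendsto 0).comp this

variable {E : Type*} [NormedAddCommGroup E] [NormedSpace ℝ E] [FiniteDimensional ℝ E]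

theorem exists_linearMap_ne_zero_intValued_of_discreteTopology (H : AddSubgroup E)
    [DiscreteTopology H] (hne : H ≠ ⊤) :
    ∃ f : E →ₗ[ℝ] ℝ, f ≠ 0 ∧ ∀ h ∈ H, ∃ z : ℤ, f h = z := by
  by_cases hspan : span ℝ (H : Set E) = ⊤
  · let L := H.toIntSubmodule
    have : DiscreteTopology L := ‹DiscreteTopology H›
    have : IsZLattice ℝ L := ⟨hspan⟩
    have : Nontrivial E := by
      obtain ⟨x, hx⟩ := SetLike.exists_not_mem_of_ne_top H hne
      exact ⟨⟨x, 0, fun h => hx (h ▸ H.zero_mem)⟩⟩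
    let b := Free.chooseBasis ℤ L
    let B := b.ofZLatticeBasis ℝ L
    obtain ⟨i⟩ := B.index_nonempty
    refine ⟨B.coord i, fun h => by simpa using LinearMap.congr_fun h (B i),
      fun h hh => ⟨b.repr ⟨h, hh⟩ i, b.ofZLatticeBasis_repr_apply ℝ L ⟨h, hh⟩ i⟩⟩
  · obtain ⟨f, hf0, hf⟩ := exists_dual_map_eq_bot_of_lt_top (lt_top_iff_ne_top.2 hspan)
      inferInstance
    refine ⟨f, hf0, fun h hh => ⟨0, ?_⟩⟩
    have := Submodule.mem_map_of_mem (f := f) (subset_span hh)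
    rw [hf, Submodule.mem_bot] at this
    rw [this, Int.cast_zero]

/-- `⌊c / ‖h‖⌋ • h → c • u` along small nonzero `h ∈ H` whose directions converge to `u`. -/
theorem exists_ne_zero_forall_smul_mem (H : AddSubgroup E) (hc : IsClosed (H : Set E))
    (hH : ¬DiscreteTopology H) : ∃ u ≠ (0 : E), ∀ c : ℝ, c • u ∈ H := by
  obtain ⟨h, hmem, hlim⟩ := H.exists_seq_tendsto_zero_of_not_discreteTopology hH
  have hpos : ∀ k, 0 < ‖h k‖ := fun k => norm_pos_iff.2 (hmem k).2
  have hsphere : ∀ k, ‖h k‖⁻¹ • h k ∈ Metric.sphere (0 : E) 1 := fun k => by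
    simp [norm_smul, (hpos k).ne']
  obtain ⟨u, hu, φ, hφ, hdir⟩ := (isCompact_sphere (0 : E) 1).tendsto_subseq hsphere
  refine ⟨u, ne_zero_of_mem_unit_sphere ⟨u, hu⟩, fun c => ?_⟩
  set a : ℕ → ℝ := fun k => ‖h (φ k)‖
  have ha : Tendsto a atTop (𝓝 0) := (tendsto_norm_zero.comp hlim).comp hφ.tendsto_atTop
  have hscalar : Tendsto (fun k => (⌊c / a k⌋ : ℝ) * a k) atTop (𝓝 c) := by
    refine tendsto_of_tendsto_of_tendsto_of_le_of_le (g := fun k => c - a k)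
      (by simpa using tendsto_const_nhds.sub ha) tendsto_const_nhds (fun k => ?_) (fun k => ?_)
    · linarith [Int.sub_floor_div_mul_lt c (hpos (φ k))]
    · linarith [Int.sub_floor_div_mul_nonneg c (hpos (φ k))]
  refine hc.mem_of_tendsto (hscalar.smul (hdir : Tendsto _ atTop (𝓝 u)))
    (Eventually.of_forall fun k => ?_)
  rw [Function.comp_apply, smul_smul, mul_assoc, mul_inv_cancel₀ (hpos (φ k)).ne', mul_one,
    Int.cast_smul_eq_zsmul]
  exact zsmul_mem (hmem (φ k)).1 _

theorem exists_linearMap_ne_zero_intValued_of_isClosed (H : AddSubgroup E)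
    (hc : IsClosed (H : Set E)) (hne : H ≠ ⊤) :
    ∃ f : E →ₗ[ℝ] ℝ, f ≠ 0 ∧ ∀ h ∈ H, ∃ z : ℤ, f h = z := by
  induction hd : finrank ℝ E using Nat.strong_induction_on generalizing E with
  | _ d ih =>
  by_cases hdisc : DiscreteTopology H
  · exact H.exists_linearMap_ne_zero_intValued_of_discreteTopology hne
  obtain ⟨u, hu, hline⟩ := H.exists_ne_zero_forall_smul_mem hc hdisc
  obtain ⟨W, hW⟩ := (ℝ ∙ u).exists_isCompl
  have hlineH : ((ℝ ∙ u : Submodule ℝ E) : Set E) ⊆ H := fun x hx => by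
    obtain ⟨c, rfl⟩ := mem_span_singleton.1 hx
    exact hline c
  have hmem := H.mem_iff_projection_mem hW.symm hlineH
  set π := W.projectionOnto (ℝ ∙ u) hW.symm
  let H' := H.comap W.subtype.toAddMonoidHom
  have hdim : finrank ℝ W < d := by
    have := finrank_add_eq_of_isCompl hW
    rw [finrank_span_singleton hu] at this
    omega
  have hne' : H' ≠ ⊤ := fun htop => hne <| eq_top_iff.2 fun x _ =>
    (hmem x).2 (show π x ∈ H' from htop ▸ mem_top _)
  obtain ⟨f, hf0, hf⟩ := ih _ hdim H' (hc.preimage continuous_subtype_val) hne' rfl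
  refine ⟨f ∘ₗ π, fun h0 => hf0 ?_, fun h hh => hf (π h) ((hmem h).1 hh)⟩
  exact (LinearMap.cancel_right (projectionOnto_surjective _)).1
    (h0.trans (LinearMap.zero_comp _).symm)

theorem dense_of_forall_intValued_linearMap_eq_zero (G : AddSubgroup E)
    (hG : ∀ f : E →ₗ[ℝ] ℝ, (∀ g ∈ G, ∃ z : ℤ, f g = z) → f = 0) : Dense (G : Set E) := by
  by_contra hdense
  have hne : G.topologicalClosure ≠ ⊤ := fun htop => hdense <| by
    rw [dense_iff_closure_eq, ← topologicalClosure_coe, htop, coe_top]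
  obtain ⟨f, hf0, hf⟩ :=
    G.topologicalClosure.exists_linearMap_ne_zero_intValued_of_isClosed
      G.isClosed_topologicalClosure hne
  exact hf0 (hG f fun g hg => hf g (G.le_topologicalClosure hg))

end AddSubgroup

/-- Multidimensional Kronecker approximation: if `ω₁, …, ω_r ∈ ℝ^n` are linearly independent
over `ℤ`, then the subgroup `G = {x : x_j = ⟨t, ω_j⟩ + p_j, t ∈ ℝ^n, p ∈ ℤ^r}` is dense
in `ℝ^r`. -/
theorem kronecker_approximation (n r : ℕ) (ω : Fin r → (Fin n → ℝ))
    (hω : ∀ q : Fin r → ℤ, (∑ j, (q j : ℝ) • ω j) = 0 → ∀ j, q j = 0) :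
    Dense {x : Fin r → ℝ |
      ∃ (t : Fin n → ℝ) (p : Fin r → ℤ), ∀ j, x j = (∑ i, t i * ω j i) + p j} := by
  let A : (Fin n → ℝ) →ₗ[ℝ] (Fin r → ℝ) := (Matrix.of ω).transpose.vecMulLinear
  let Φ : (Fin n → ℝ) × (Fin r → ℤ) →+ (Fin r → ℝ) :=
    A.toAddMonoidHom.coprod ((Int.castAddHom ℝ).compLeft (Fin r))
  have hG : {x : Fin r → ℝ | ∃ (t : Fin n → ℝ) (p : Fin r → ℤ),
      ∀ j, x j = (∑ i, t i * ω j i) + p j} = Φ.range := by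
    ext x
    simp [Φ, A, funext_iff, eq_comm, Matrix.mulVec, dotProduct, mul_comm]
  rw [hG]
  refine Φ.range.dense_of_forall_intValued_linearMap_eq_zero fun f hf => ?_
  choose q hq using fun j => hf (fun k => if j = k then 1 else 0)
    ⟨(0, fun k => if j = k then 1 else 0), by ext; simp [Φ, apply_ite]⟩
  have hfA : f ∘ₗ A = 0 :=
    LinearMap.eq_zero_of_forall_exists_int _ fun t => hf (A t) ⟨(t, 0), by simp [Φ]⟩
  have hrel : ∑ j, (q j : ℝ) • ω j = 0 := by
    ext i
    have := LinearMap.congr_fun hfA (Pi.single i 1)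
    rw [LinearMap.comp_apply, LinearMap.pi_apply_eq_sum_univ] at this
    simpa [A, hq, Matrix.vecMul, dotProduct, Pi.single_apply, mul_comm] using this
  refine LinearMap.ext fun x => ?_
  simp [LinearMap.pi_apply_eq_sum_univ f x, hq, hω q hrel]
end

section
/- Let F be a finite family of exponential sums with real frequencies on ℂ^n. Then the amoeba 𝒴_F := ⋃_{χ ∈ Ch Ξ_F} Re V(F_χ) is a closed subset of ℝ^n. -/
open Complex

/-- The zero set of the character-perturbed system `F_χ` in `ℂ^n`, for a finite system of
exponential sums with real frequencies given by spectra `Λ k` and coefficients `c k`. -/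
def expSumZeroSet (n N : ℕ) (Λ : Fin N → Finset (Fin n → ℝ)) (c : Fin N → (Fin n → ℝ) → ℂ)
    (χ : AddChar (Fin n → ℝ) Circle) : Set (Fin n → ℂ) :=
  {z | ∀ k, ∑ l ∈ Λ k, c k l * (χ l : ℂ) * Complex.exp (∑ j, z j * (l j : ℂ)) = 0}

/-!
Writing `z = x + i y`, the factor `l ↦ exp (i ⟨y, l⟩)` of each exponential is itself a character
of the frequencies, so it can be absorbed into `χ`: the amoeba is the set of real points `x` at
which some `F_χ` vanishes. Characters, viewed as functions `ℝⁿ → 𝕊¹`, form a closed subset of the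
compact space `(𝕊¹)^{ℝⁿ}`, the pairs `(χ, x)` with `F_χ(x) = 0` form a closed set by continuity,
and projecting away a compact factor is a closed map.
-/

theorem isClosed_iUnion_of_isClosed_range {ι K X : Type*} [TopologicalSpace K] [CompactSpace K]
    [TopologicalSpace X] {e : ι → K} (he : IsClosed (Set.range e)) {T : K → Set X}
    (hT : IsClosed {p : K × X | p.2 ∈ T p.1}) : IsClosed (⋃ i, T (e i)) := by
  have : (⋃ i, T (e i)) = Prod.snd '' ({p : K × X | p.1 ∈ Set.range e} ∩ {p | p.2 ∈ T p.1}) := by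
    ext x; simp
  rw [this]
  exact isClosedMap_snd_of_compactSpace _ ((he.preimage continuous_fst).inter hT)

theorem AddChar.isClosed_range_coe (A M : Type*) [AddMonoid A] [Monoid M] [TopologicalSpace M]
    [T2Space M] [ContinuousMul M] : IsClosed (Set.range ((⇑) : AddChar A M → A → M)) := by
  have : Set.range ((⇑) : AddChar A M → A → M) =
      {f | f 0 = 1} ∩ ⋂ a, ⋂ b, {f | f (a + b) = f a * f b} := by
    ext f
    simp only [Set.mem_range, Set.mem_inter_iff, Set.mem_ofPred_eq, Set.mem_iInter]
    exact ⟨by rintro ⟨ψ, rfl⟩; exact ⟨ψ.map_zero_eq_one, ψ.map_add_eq_mul⟩,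
      fun ⟨h0, hadd⟩ => ⟨⟨f, h0, hadd⟩, rfl⟩⟩
  rw [this]
  exact (isClosed_eq (continuous_apply 0) continuous_const).inter <|
    isClosed_iInter fun a => isClosed_iInter fun b =>
      isClosed_eq (continuous_apply _) ((continuous_apply a).mul (continuous_apply b))

section
variable {ι : Type*} [Fintype ι]

noncomputable def expDotChar (y : ι → ℝ) : AddChar (ι → ℝ) Circle where
  toFun l := Circle.exp (∑ j, y j * l j)
  map_zero_eq_one' := by simp
  map_add_eq_mul' a b := by
    simp only [Pi.add_apply, mul_add, Finset.sum_add_distrib, Circle.exp_add]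

theorem exp_sum_mul_eq_exp_re_mul_expDotChar_im (z : ι → ℂ) (l : ι → ℝ) :
    Complex.exp (∑ j, z j * l j) =
      Complex.exp (∑ j, ((z j).re : ℂ) * l j) * (expDotChar (fun j => (z j).im) l : ℂ) := by
  simp only [expDotChar, AddChar.coe_mk, Circle.coe_exp, ← Complex.exp_add]
  congr 1
  push_cast
  rw [Finset.sum_mul, ← Finset.sum_add_distrib]
  refine Finset.sum_congr rfl fun j _ => ?_
  conv_lhs => rw [← Complex.re_add_im (z j)]
  ring
end

theorem ofReal_re_mem_expSumZeroSet {n N : ℕ} {Λ : Fin N → Finset (Fin n → ℝ)}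
    {c : Fin N → (Fin n → ℝ) → ℂ} {χ : AddChar (Fin n → ℝ) Circle} {z : Fin n → ℂ}
    (hz : z ∈ expSumZeroSet n N Λ c χ) :
    (fun j => ((z j).re : ℂ)) ∈ expSumZeroSet n N Λ c (χ * expDotChar fun j => (z j).im) := by
  intro k
  rw [← hz k]
  refine Finset.sum_congr rfl fun l _ => ?_
  rw [exp_sum_mul_eq_exp_re_mul_expDotChar_im z l, AddChar.mul_apply, Circle.coe_mul]
  ring

theorem iUnion_re_image_expSumZeroSet (n N : ℕ) (Λ : Fin N → Finset (Fin n → ℝ))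
    (c : Fin N → (Fin n → ℝ) → ℂ) :
    (⋃ χ : AddChar (Fin n → ℝ) Circle,
      (fun z : Fin n → ℂ => fun j => (z j).re) '' expSumZeroSet n N Λ c χ) =
    ⋃ χ : AddChar (Fin n → ℝ) Circle,
      (fun x : Fin n → ℝ => fun j => (x j : ℂ)) ⁻¹' expSumZeroSet n N Λ c χ := by
  apply subset_antisymm
  · rintro _ ⟨_, ⟨χ, rfl⟩, z, hz, rfl⟩
    exact Set.mem_iUnion.2 ⟨_, ofReal_re_mem_expSumZeroSet hz⟩
  · rintro x ⟨_, ⟨χ, rfl⟩, hx⟩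
    exact Set.mem_iUnion.2 ⟨χ, _, hx, by simp⟩

theorem isClosed_iUnion_preimage_ofReal_expSumZeroSet (n N : ℕ) (Λ : Fin N → Finset (Fin n → ℝ))
    (c : Fin N → (Fin n → ℝ) → ℂ) :
    IsClosed (⋃ χ : AddChar (Fin n → ℝ) Circle,
      (fun x : Fin n → ℝ => fun j => (x j : ℂ)) ⁻¹' expSumZeroSet n N Λ c χ) := by
  refine isClosed_iUnion_of_isClosed_range (AddChar.isClosed_range_coe _ _)
    (T := fun f : (Fin n → ℝ) → Circle => {x : Fin n → ℝ | ∀ k, ∑ l ∈ Λ k, c k l * (f l : ℂ) *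
      Complex.exp (∑ j, (x j : ℂ) * (l j : ℂ)) = 0}) ?_
  simp only [Set.ofPred_forall, Set.mem_iInter, Set.mem_ofPred_eq]
  exact isClosed_iInter fun k => isClosed_eq (by fun_prop) continuous_const

theorem amoeba_isClosed_general (n N : ℕ) (Λ : Fin N → Finset (Fin n → ℝ))
    (c : Fin N → (Fin n → ℝ) → ℂ) :
    IsClosed (⋃ χ : AddChar (Fin n → ℝ) Circle,
      (fun z : Fin n → ℂ => fun j => (z j).re) '' expSumZeroSet n N Λ c χ) := by
  rw [iUnion_re_image_expSumZeroSet]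
  exact isClosed_iUnion_preimage_ofReal_expSumZeroSet n N Λ c

/-- The amoeba `𝒴_F = ⋃_χ Re V(F_χ)` of a finite system of exponential sums with real
frequencies is a closed subset of `ℝ^n`. -/
theorem amoeba_isClosed (n N : ℕ) (Λ : Fin N → Finset (Fin n → ℝ))
    (c : Fin N → (Fin n → ℝ) → ℂ) (hc : ∀ k, ∀ l ∈ Λ k, c k l ≠ 0) :
    IsClosed (⋃ χ : AddChar (Fin n → ℝ) Circle,
      (fun z : Fin n → ℂ => fun j => (z j).re) '' expSumZeroSet n N Λ c χ) :=
  amoeba_isClosed_general n N Λ c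
end

section
/- Let F be a finite set of exponential sums on ℂ^n with real frequencies such that the rank of the additive group Ξ_F generated by the frequencies equals the dimension of the ℝ-vector space spanned by the frequencies. Then 𝒴_F = Re V(F), i.e., for every character χ of Ξ_F, Re V(F_χ) = Re V(F). -/
/-!
When the rank of `Ξ_F` equals the dimension of its real span, a `ℤ`-basis of `Ξ_F` is
`ℝ`-linearly independent, so a real linear functional `f` can be prescribed on it with
`χ ω = exp (i f ω)`, and then this identity holds on all of `Ξ_F`. Writing `f λ = ⟨w, λ⟩`, the
translation `u ↦ u + i w` maps `V(F_χ)` to `V(F)` without changing real parts.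
-/

open Complex

open Module Submodule

theorem Module.Basis.span_range_coe {R M ι : Type*} [Semiring R] [AddCommMonoid M] [Module R M]
    {p : Submodule R M} (b : Basis ι R p) : span R (Set.range fun i => (b i : M)) = p := by
  change span R (Set.range (p.subtype ∘ b)) = p
  rw [Set.range_comp, span_image, b.span_eq, Submodule.map_top, range_subtype]

theorem Module.Basis.linearIndependent_of_finrank_span_int_eq {K V ι : Type*} [Field K]
    [AddCommGroup V] [Module K V] [Fintype ι] {S : Set V} (b : Basis ι ℤ (span ℤ S))
    (hrank : finrank ℤ (span ℤ S) = finrank K (span K S)) :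
    LinearIndependent K fun i => (b i : V) := by
  rw [linearIndependent_iff_card_eq_finrank_span, Set.finrank, ← span_span_of_tower ℤ,
    b.span_range_coe, span_span_of_tower, ← hrank, finrank_eq_card_basis b]

theorem LinearIndependent.exists_linearMap_apply_eq {K V W ι : Type*} [Field K] [AddCommGroup V]
    [Module K V] [AddCommGroup W] [Module K W] {v : ι → V} (hv : LinearIndependent K v)
    (w : ι → W) : ∃ f : V →ₗ[K] W, ∀ i, f (v i) = w i := by
  obtain ⟨f, hf⟩ := LinearMap.exists_extend ((Basis.span hv).constr K w)
  refine ⟨f, fun i => ?_⟩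
  have := LinearMap.congr_fun hf (Basis.span hv i)
  rwa [Basis.constr_basis, LinearMap.comp_apply, Submodule.subtype_apply, Basis.span_apply] at this

theorem AddChar.eqOn_span_int {A M : Type*} [AddCommGroup A] [CommGroup M] {χ ψ : AddChar A M}
    {s : Set A} (h : Set.EqOn χ ψ s) : Set.EqOn χ ψ (span ℤ s) := by
  intro x hx
  rw [SetLike.mem_coe, ← mem_toAddSubgroup, span_int_eq_addSubgroupClosure] at hx
  exact congrArg Additive.toMul <| AddMonoidHom.eqOn_closure
    (f := χ.toAddMonoidHom) (g := ψ.toAddMonoidHom) (fun y hy => congrArg Additive.ofMul (h hy)) hx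

theorem AddChar.exists_linearMap_eq_circleExp_of_finrank_span_int_eq {V : Type*}
    [AddCommGroup V] [Module ℝ V] {S : Set V} (hS : S.Finite)
    (hrank : finrank ℤ (span ℤ S) = finrank ℝ (span ℝ S)) (χ : AddChar V Circle) :
    ∃ f : V →ₗ[ℝ] ℝ, ∀ l ∈ span ℤ S, χ l = Circle.exp (f l) := by
  have : IsAddTorsionFree V := .of_isTorsionFree ℝ V
  have : Module.Finite ℤ (span ℤ S) := .span_of_finite ℤ hS
  let b := Module.finBasis ℤ (span ℤ S)
  obtain ⟨f, hf⟩ := (b.linearIndependent_of_finrank_span_int_eq hrank).exists_linearMap_apply_eq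
    fun i => arg (χ (b i))
  let ψ : AddChar V Circle := toAddMonoidHomEquiv.symm (Circle.expHom.comp f.toAddMonoidHom)
  have hχψ : Set.EqOn χ ψ (Set.range fun i => (b i : V)) := by
    rintro _ ⟨i, rfl⟩
    change _ = Circle.exp (f (b i))
    rw [hf, Circle.exp_arg]
  refine ⟨f, fun l hl => AddChar.eqOn_span_int hχψ ?_⟩
  rwa [SetLike.mem_coe, b.span_range_coe]

theorem LinearMap.exp_sum_add_mul_I {n : ℕ} (f : (Fin n → ℝ) →ₗ[ℝ] ℝ) (u : Fin n → ℂ)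
    (l : Fin n → ℝ) :
    Complex.exp (∑ j, (u j + f (Pi.single j 1) * I) * l j) =
      Circle.exp (f l) * Complex.exp (∑ j, u j * l j) := by
  have hf : f l = ∑ j, l j * f (Pi.single j 1) := by
    conv_lhs => rw [← (Pi.basisFun ℝ (Fin n)).sum_repr l]
    simp
  rw [Circle.coe_exp, ← Complex.exp_add, hf]
  push_cast
  rw [Finset.sum_mul, ← Finset.sum_add_distrib]
  exact congrArg _ (Finset.sum_congr rfl fun j _ => by ring)

theorem add_mul_I_mem_expSumZeroSet_one_iff {n N : ℕ} {Λ : Fin N → Finset (Fin n → ℝ)}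
    {c : Fin N → (Fin n → ℝ) → ℂ} {χ : AddChar (Fin n → ℝ) Circle} {f : (Fin n → ℝ) →ₗ[ℝ] ℝ}
    (hf : ∀ k, ∀ l ∈ Λ k, χ l = Circle.exp (f l)) (u : Fin n → ℂ) :
    (fun j => u j + f (Pi.single j 1) * I) ∈ expSumZeroSet n N Λ c 1 ↔
      u ∈ expSumZeroSet n N Λ c χ := by
  refine forall_congr' fun k => Eq.congr_left (Finset.sum_congr rfl fun l hl => ?_)
  rw [f.exp_sum_add_mul_I, ← hf k l hl, AddChar.one_apply, Circle.coe_one]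
  ring

theorem amoeba_eq_re_zeroSet_of_rank_eq_general (n N : ℕ) (Λ : Fin N → Finset (Fin n → ℝ))
    (c : Fin N → (Fin n → ℝ) → ℂ)
    (hrank : Module.finrank ℤ ↥(Submodule.span ℤ (⋃ k, (Λ k : Set (Fin n → ℝ)))) =
      Module.finrank ℝ ↥(Submodule.span ℝ (⋃ k, (Λ k : Set (Fin n → ℝ))))) :
    (⋃ χ : AddChar (Fin n → ℝ) Circle,
        (fun z : Fin n → ℂ => fun j => (z j).re) '' expSumZeroSet n N Λ c χ) =
      (fun z : Fin n → ℂ => fun j => (z j).re) '' expSumZeroSet n N Λ c 1 := by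
  refine subset_antisymm (Set.iUnion_subset fun χ => ?_) (Set.subset_iUnion_of_subset 1 le_rfl)
  rintro _ ⟨u, hu, rfl⟩
  obtain ⟨f, hf⟩ := AddChar.exists_linearMap_eq_circleExp_of_finrank_span_int_eq
    (Set.finite_iUnion fun k => (Λ k).finite_toSet) hrank χ
  have hfΛ : ∀ k, ∀ l ∈ Λ k, χ l = Circle.exp (f l) := fun k l hl =>
    hf l (subset_span (Set.mem_iUnion_of_mem k hl))
  refine ⟨_, (add_mul_I_mem_expSumZeroSet_one_iff hfΛ u).2 hu, ?_⟩
  simp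

/-- If the rank of the additive group generated by the frequencies of `F` equals the dimension
of the real vector space they span, then the amoeba `𝒴_F = ⋃_χ Re V(F_χ)` equals `Re V(F)`,
i.e. every character perturbation has the same set of real parts of zeros. -/
theorem amoeba_eq_re_zeroSet_of_rank_eq (n N : ℕ) (Λ : Fin N → Finset (Fin n → ℝ))
    (c : Fin N → (Fin n → ℝ) → ℂ) (hc : ∀ k, ∀ l ∈ Λ k, c k l ≠ 0)
    (hrank : Module.finrank ℤ ↥(Submodule.span ℤ (⋃ k, (Λ k : Set (Fin n → ℝ)))) =
      Module.finrank ℝ ↥(Submodule.span ℝ (⋃ k, (Λ k : Set (Fin n → ℝ))))) :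
    (⋃ χ : AddChar (Fin n → ℝ) Circle,
        (fun z : Fin n → ℂ => fun j => (z j).re) '' expSumZeroSet n N Λ c χ) =
      (fun z : Fin n → ℂ => fun j => (z j).re) '' expSumZeroSet n N Λ c 1 :=
  amoeba_eq_re_zeroSet_of_rank_eq_general n N Λ c hrank
end

section
/- Let γ ∈ ℝ \ ℚ and f : ℂ → ℂ be given by f(z) = cos(iz) + sin(iγz) − 2. Then f has no zero on the imaginary axis, i.e., f(it) ≠ 0 for all t ∈ ℝ; equivalently 0 ∉ Re V(f). -/
/-!
On the imaginary axis `z = -t i` both `cos (i z) = cos t` and `sin (i γ z) = sin (γ t)` are real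
and at most `1`, so a zero forces `cos t = 1` and `sin (γ t) = 1`, i.e. `t ∈ 2πℤ` and
`γ t ∈ π/2 + 2πℤ`. As `sin 0 ≠ 1`, `t ≠ 0`, and this makes `γ = (1 + 4k) / (4n)` rational.
-/

open Real

lemma Real.cos_add_sin_eq_two_iff {x y : ℝ} : cos x + sin y = 2 ↔ cos x = 1 ∧ sin y = 1 := by
  constructor
  · intro h
    constructor <;> linarith [cos_le_one x, sin_le_one y]
  · rintro ⟨hx, hy⟩
    rw [hx, hy]
    norm_num

lemma Irrational.sin_mul_ne_one_of_cos_eq_one {γ t : ℝ} (hγ : Irrational γ) (hcos : cos t = 1) :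
    sin (γ * t) ≠ 1 := by
  intro hsin
  obtain ⟨n, rfl⟩ := (cos_eq_one_iff t).mp hcos
  obtain ⟨k, hk⟩ := sin_eq_one_iff.mp hsin
  have hn : (n : ℝ) ≠ 0 := by
    rintro hn
    rw [hn, zero_mul, mul_zero, sin_zero] at hsin
    exact zero_ne_one hsin
  apply hγ
  refine ⟨(1 + 4 * k) / (4 * n), ?_⟩
  have hkπ : (1 + 4 * k) * π = 4 * n * γ * π := by linarith
  push_cast
  field_simp
  exact mul_right_cancel₀ pi_ne_zero hkπ

lemma Complex.I_mul_eq_neg_im_of_re_eq_zero {z : ℂ} (hz : z.re = 0) :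
    Complex.I * z = ((-z.im : ℝ) : ℂ) := by
  apply Complex.ext <;> simp [hz]

/-- For irrational `γ`, the exponential sum `f(z) = cos(iz) + sin(iγz) − 2` has no zero on
the imaginary axis, i.e. no zero with real part `0`. -/
theorem no_purely_imaginary_zero (γ : ℝ) (hγ : Irrational γ) :
    ∀ z : ℂ, z.re = 0 →
      Complex.cos (Complex.I * z) + Complex.sin (Complex.I * (γ : ℂ) * z) - 2 ≠ 0 := by
  intro z hz h
  set t := -z.im
  have hIz : Complex.I * z = t := Complex.I_mul_eq_neg_im_of_re_eq_zero hz
  have hIγz : Complex.I * γ * z = ((γ * t : ℝ) : ℂ) := by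
    rw [mul_right_comm, hIz]
    push_cast
    ring
  rw [hIz, hIγz, ← Complex.ofReal_cos, ← Complex.ofReal_sin, sub_eq_zero] at h
  obtain ⟨hcos, hsin⟩ := cos_add_sin_eq_two_iff.mp (by exact_mod_cast h)
  exact hγ.sin_mul_ne_one_of_cos_eq_one hcos hsin
end
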